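/- arXiv:1002.3682 — 5 statements merged into one kernel-verified Lean document; each statement's English description precedes it below -/
import Mathlib

section
/- Let a, b, t be positive real numbers. Then ∫₀ᵗ (2π(t−m))^{−1/2} e^{−a²/(2(t−m))} · b·(2π)^{−1/2}·m^{−3/2}·e^{−b²/(2m)} dm = (2πt)^{−1/2} e^{−(a+b)²/(2t)}. Equivalently, writing p_s(x) := (2πs)^{−1/2} e^{−x²/(2s)} for the centered Gaussian density with variance s and p′_s its derivative in x, ∫₀ᵗ p_{t−m}(a)·(−p′_m(b)) dm = p_t(a+b). -/
/-!
Write `z₊ = hitArg a b t` and `z₋ = hitArg a (-b) t`, that is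
`z_± s = (a s ± b (t - s)) / √(s (t - s))`, and `Φ x = ∫₀ˣ e^{-u²/(2t)} du`.
Since `z₊² - z₋² = 4ab` and `z_±' = t z_∓ / (2 s (t - s))`, the function
`F = Φ ∘ z₋ - e^{2ab/t} Φ ∘ z₊` has derivative `e^{-z₋²/(2t)} · t b / (s √(s (t - s)))`, and
`z₋²/(2t) + (a+b)²/(2t) = a²/(2(t-s)) + b²/(2s)` identifies this with `2πt e^{(a+b)²/(2t)}`
times the integrand. As `s → 0⁺`, `z₋ → -∞` and `z₊ → +∞`, while as `s → t⁻` both tend to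
`+∞`, so `F` increases by `√(2πt)` across `(0, t)`. The integrand is a nonnegative derivative,
hence integrable, and the fundamental theorem of calculus applies.
-/

open MeasureTheory Real Set Filter Topology

theorem integral_eq_sub_of_hasDerivAt_of_tendsto_of_nonneg {f f' : ℝ → ℝ} {a b fa fb : ℝ}
    (hab : a < b) (hderiv : ∀ x ∈ Ioo a b, HasDerivAt f (f' x) x)
    (hf' : ∀ x ∈ Ioo a b, 0 ≤ f' x) (ha : Tendsto f (𝓝[>] a) (𝓝 fa))
    (hb : Tendsto f (𝓝[<] b) (𝓝 fb)) :
    ∫ x in a..b, f' x = fb - fa := by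
  have hf : ContinuousOn f (Ioo a b) := fun x hx => (hderiv x hx).continuousAt.continuousWithinAt
  have hext : ∀ x ∈ Ioo a b, HasDerivAt (extendFrom (Ioo a b) f) (f' x) x := fun x hx =>
    (hderiv x hx).congr_of_eventuallyEq <| by
      filter_upwards [Ioo_mem_nhds hx.1 hx.2] with y hy using extendFrom_extends hf y hy
  have hint : IntervalIntegrable f' volume a b :=
    (intervalIntegrable_iff_integrableOn_Ioc_of_le hab.le).2 <|
      intervalIntegral.integrableOn_deriv_of_nonneg (continuousOn_Icc_extendFrom_Ioo hf ha hb)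
        hext hf'
  exact intervalIntegral.integral_eq_sub_of_hasDerivAt_of_tendsto hab hderiv hint ha hb

section GaussPrimitive

variable {v : ℝ}

noncomputable def gaussPrimitive (v x : ℝ) : ℝ := ∫ u in (0 : ℝ)..x, exp (-u ^ 2 / (2 * v))

lemma hasDerivAt_gaussPrimitive (v x : ℝ) :
    HasDerivAt (gaussPrimitive v) (exp (-x ^ 2 / (2 * v))) x :=
  ((by fun_prop : Continuous fun u : ℝ => exp (-u ^ 2 / (2 * v))).integral_hasStrictDerivAt
    0 x).hasDerivAt

lemma gaussPrimitive_neg (v x : ℝ) : gaussPrimitive v (-x) = -gaussPrimitive v x := by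
  have h := intervalIntegral.integral_comp_neg (a := 0) (b := x)
    (fun u : ℝ => exp (-u ^ 2 / (2 * v)))
  simp only [neg_sq, neg_zero] at h
  rw [gaussPrimitive, gaussPrimitive, intervalIntegral.integral_symm, ← h]

lemma tendsto_gaussPrimitive_atTop (hv : 0 < v) :
    Tendsto (gaussPrimitive v) atTop (𝓝 (√(2 * π * v) / 2)) := by
  have hform : (fun u : ℝ => exp (-u ^ 2 / (2 * v))) = fun u => exp (-(2 * v)⁻¹ * u ^ 2) := by
    ext u; ring_nf
  have hint : Integrable fun u : ℝ => exp (-u ^ 2 / (2 * v)) := by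
    rw [hform]; exact integrable_exp_neg_mul_sq (by positivity)
  have hIoi : ∫ u in Ioi (0 : ℝ), exp (-u ^ 2 / (2 * v)) = √(2 * π * v) / 2 := by
    rw [hform, integral_gaussian_Ioi, div_inv_eq_mul]; ring_nf
  rw [← hIoi]
  exact intervalIntegral_tendsto_integral_Ioi 0 hint.integrableOn tendsto_id

lemma tendsto_gaussPrimitive_atBot (hv : 0 < v) :
    Tendsto (gaussPrimitive v) atBot (𝓝 (-(√(2 * π * v) / 2))) := by
  have h := ((tendsto_gaussPrimitive_atTop hv).comp tendsto_neg_atBot_atTop).neg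
  refine h.congr fun x => ?_
  simp [gaussPrimitive_neg]

end GaussPrimitive

section HittingArgument

variable {a b t s : ℝ}

noncomputable def hitArg (a b t s : ℝ) : ℝ := (a * s + b * (t - s)) / √(s * (t - s))

lemma sq_sqrt_mul_sub (hs : s ∈ Ioo 0 t) : √(s * (t - s)) ^ 2 = s * (t - s) :=
  sq_sqrt (mul_pos hs.1 (sub_pos.2 hs.2)).le

lemma hasDerivAt_hitArg (hs : s ∈ Ioo 0 t) :
    HasDerivAt (hitArg a b t) (t / (2 * (s * (t - s))) * hitArg a (-b) t s) s := by
  have hst : 0 < s * (t - s) := mul_pos hs.1 (sub_pos.2 hs.2)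
  have hw : HasDerivAt (fun x => √(x * (t - x))) ((t - 2 * s) / (2 * √(s * (t - s)))) s :=
    (((hasDerivAt_id' s).mul ((hasDerivAt_id' s).const_sub t)).congr_deriv
      (by ring)).sqrt hst.ne'
  have hnum : HasDerivAt (fun x => a * x + b * (t - x)) (a - b) s :=
    (((hasDerivAt_id' s).const_mul a).add
      (((hasDerivAt_id' s).const_sub t).const_mul b)).congr_deriv (by ring)
  refine (hnum.div hw (sqrt_pos.2 hst).ne').congr_deriv ?_
  have h0 := hs.1.ne'
  have h1 := (sub_pos.2 hs.2).ne'
  unfold hitArg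
  field_simp
  rw [sq_sqrt_mul_sub hs]
  ring

lemma hitArg_sub_hitArg_neg :
    hitArg a b t s - hitArg a (-b) t s = 2 * b * (t - s) / √(s * (t - s)) := by
  unfold hitArg; ring

lemma hitArg_sq_sub_hitArg_neg_sq (hs : s ∈ Ioo 0 t) :
    hitArg a b t s ^ 2 - hitArg a (-b) t s ^ 2 = 4 * a * b := by
  have h0 := hs.1.ne'
  have h1 := (sub_pos.2 hs.2).ne'
  unfold hitArg
  rw [div_pow, div_pow, sq_sqrt_mul_sub hs]
  field_simp
  ring

lemma hitArg_neg_sq_add (hs : s ∈ Ioo 0 t) :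
    hitArg a (-b) t s ^ 2 / (2 * t) + (a + b) ^ 2 / (2 * t)
      = a ^ 2 / (2 * (t - s)) + b ^ 2 / (2 * s) := by
  have h1 := hs.1.ne'
  have h2 := (sub_pos.2 hs.2).ne'
  have ht : t ≠ 0 := (hs.1.trans hs.2).ne'
  unfold hitArg
  rw [div_pow, sq_sqrt_mul_sub hs]
  field_simp
  ring

noncomputable def hitPrimitive (a b t s : ℝ) : ℝ :=
  gaussPrimitive t (hitArg a (-b) t s) - exp (2 * a * b / t) * gaussPrimitive t (hitArg a b t s)

lemma hasDerivAt_hitPrimitive (hs : s ∈ Ioo 0 t) :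
    HasDerivAt (hitPrimitive a b t)
      (exp (-hitArg a (-b) t s ^ 2 / (2 * t)) * (t * b / (s * √(s * (t - s))))) s := by
  have hminus := (hasDerivAt_gaussPrimitive t _).comp s (hasDerivAt_hitArg (a := a) (b := -b) hs)
  have hplus := ((hasDerivAt_gaussPrimitive t _).comp s
    (hasDerivAt_hitArg (a := a) (b := b) hs)).const_mul (exp (2 * a * b / t))
  have hexp : exp (2 * a * b / t) * exp (-hitArg a b t s ^ 2 / (2 * t))
      = exp (-hitArg a (-b) t s ^ 2 / (2 * t)) := by
    have ht : t ≠ 0 := (hs.1.trans hs.2).ne'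
    rw [← exp_add]
    congr 1
    field_simp
    linear_combination -hitArg_sq_sub_hitArg_neg_sq (a := a) (b := b) hs
  refine (hminus.sub hplus).congr_deriv ?_
  rw [neg_neg, ← mul_assoc (exp (2 * a * b / t)), hexp, ← mul_sub, ← mul_sub,
    hitArg_sub_hitArg_neg]
  have h0 := hs.1.ne'
  have h1 := (sub_pos.2 hs.2).ne'
  field_simp

end HittingArgument

lemma Filter.Tendsto.div_sqrt_atTop {α : Type*} {l : Filter α} {u v : α → ℝ} {c : ℝ}
    (hu : Tendsto u l (𝓝 c)) (hc : 0 < c) (hv : Tendsto v l (𝓝[>] 0)) :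
    Tendsto (fun x => u x / √(v x)) l atTop := by
  have hinv : Tendsto (fun x => (√(v x))⁻¹) l atTop := by
    simpa only [Function.comp_def, Real.sqrt_inv] using
      tendsto_sqrt_atTop.comp (tendsto_inv_nhdsGT_zero.comp hv)
  simpa only [div_eq_mul_inv] using hu.pos_mul_atTop hc hinv

lemma Filter.Tendsto.div_sqrt_atBot {α : Type*} {l : Filter α} {u v : α → ℝ} {c : ℝ}
    (hu : Tendsto u l (𝓝 c)) (hc : c < 0) (hv : Tendsto v l (𝓝[>] 0)) :
    Tendsto (fun x => u x / √(v x)) l atBot := by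
  simpa only [neg_div, neg_neg, tendsto_neg_atTop_iff] using
    hu.neg.div_sqrt_atTop (neg_pos.2 hc) hv

section Boundary

variable {a b t : ℝ}

lemma tendsto_mul_sub_nhdsGT_zero (ht : 0 < t) :
    Tendsto (fun s => s * (t - s)) (𝓝[>] 0) (𝓝[>] 0) := by
  refine tendsto_nhdsWithin_iff.2 ⟨?_, ?_⟩
  · exact ((by fun_prop : Continuous fun s : ℝ => s * (t - s)).tendsto' 0 0 (by simp)).mono_left
      nhdsWithin_le_nhds
  · filter_upwards [Ioo_mem_nhdsGT ht] with s hs using mul_pos hs.1 (sub_pos.2 hs.2)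

lemma tendsto_mul_sub_nhdsLT (ht : 0 < t) :
    Tendsto (fun s => s * (t - s)) (𝓝[<] t) (𝓝[>] 0) := by
  refine tendsto_nhdsWithin_iff.2 ⟨?_, ?_⟩
  · exact ((by fun_prop : Continuous fun s : ℝ => s * (t - s)).tendsto' t 0 (by simp)).mono_left
      nhdsWithin_le_nhds
  · filter_upwards [Ioo_mem_nhdsLT ht] with s hs using mul_pos hs.1 (sub_pos.2 hs.2)

lemma tendsto_hitArg_atTop {l : Filter ℝ} {s₀ : ℝ} (hl : l ≤ 𝓝 s₀)
    (hs₀ : 0 < a * s₀ + b * (t - s₀)) (hv : Tendsto (fun s => s * (t - s)) l (𝓝[>] 0)) :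
    Tendsto (hitArg a b t) l atTop :=
  (((by fun_prop : Continuous fun s => a * s + b * (t - s)).tendsto s₀).mono_left
    hl).div_sqrt_atTop hs₀ hv

lemma tendsto_hitArg_atBot {l : Filter ℝ} {s₀ : ℝ} (hl : l ≤ 𝓝 s₀)
    (hs₀ : a * s₀ + b * (t - s₀) < 0) (hv : Tendsto (fun s => s * (t - s)) l (𝓝[>] 0)) :
    Tendsto (hitArg a b t) l atBot :=
  (((by fun_prop : Continuous fun s => a * s + b * (t - s)).tendsto s₀).mono_left
    hl).div_sqrt_atBot hs₀ hv

lemma tendsto_hitPrimitive_nhdsGT_zero (hb : 0 < b) (ht : 0 < t) :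
    Tendsto (hitPrimitive a b t) (𝓝[>] 0)
      (𝓝 (-(√(2 * π * t) / 2) - exp (2 * a * b / t) * (√(2 * π * t) / 2))) := by
  have hminus : Tendsto (hitArg a (-b) t) (𝓝[>] 0) atBot :=
    tendsto_hitArg_atBot nhdsWithin_le_nhds (by nlinarith) (tendsto_mul_sub_nhdsGT_zero ht)
  have hplus : Tendsto (hitArg a b t) (𝓝[>] 0) atTop :=
    tendsto_hitArg_atTop nhdsWithin_le_nhds (by nlinarith) (tendsto_mul_sub_nhdsGT_zero ht)
  exact ((tendsto_gaussPrimitive_atBot ht).comp hminus).sub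
    (((tendsto_gaussPrimitive_atTop ht).comp hplus).const_mul _)

lemma tendsto_hitPrimitive_nhdsLT (ha : 0 < a) (ht : 0 < t) :
    Tendsto (hitPrimitive a b t) (𝓝[<] t)
      (𝓝 (√(2 * π * t) / 2 - exp (2 * a * b / t) * (√(2 * π * t) / 2))) := by
  have hz (c : ℝ) : Tendsto (hitArg a c t) (𝓝[<] t) atTop :=
    tendsto_hitArg_atTop nhdsWithin_le_nhds (by nlinarith) (tendsto_mul_sub_nhdsLT ht)
  exact ((tendsto_gaussPrimitive_atTop ht).comp (hz (-b))).sub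
    (((tendsto_gaussPrimitive_atTop ht).comp (hz b)).const_mul _)

end Boundary

lemma rpow_neg_half_mul_rpow_neg_three_halves {c u m : ℝ} (hc : 0 < c) (hu : 0 < u)
    (hm : 0 < m) :
    (c * u) ^ (-(1 / 2 : ℝ)) * c ^ (-(1 / 2 : ℝ)) * m ^ (-(3 / 2 : ℝ))
      = (c * m * √(m * u))⁻¹ := by
  rw [show (3 / 2 : ℝ) = 1 + 1 / 2 by norm_num, rpow_neg hm.le, rpow_add hm, rpow_one,
    rpow_neg (by positivity), rpow_neg hc.le, ← sqrt_eq_rpow, ← sqrt_eq_rpow, ← sqrt_eq_rpow,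
    sqrt_mul hc.le, sqrt_mul hm.le, ← mul_inv, ← mul_inv]
  congr 1
  linear_combination (m * √m * √u) * mul_self_sqrt hc.le

lemma firstPassage_convolution_integrand_eq {a b t m : ℝ} (hm : m ∈ Ioo 0 t) :
    (2 * π * (t - m)) ^ (-(1 / 2 : ℝ)) * exp (-a ^ 2 / (2 * (t - m))) *
        (b * (2 * π) ^ (-(1 / 2 : ℝ)) * m ^ (-(3 / 2 : ℝ)) * exp (-b ^ 2 / (2 * m)))
      = (2 * π * t)⁻¹ * exp (-(a + b) ^ 2 / (2 * t)) *
        (exp (-hitArg a (-b) t m ^ 2 / (2 * t)) * (t * b / (m * √(m * (t - m))))) := by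
  have hexp : exp (-a ^ 2 / (2 * (t - m))) * exp (-b ^ 2 / (2 * m))
      = exp (-(a + b) ^ 2 / (2 * t)) * exp (-hitArg a (-b) t m ^ 2 / (2 * t)) := by
    rw [← exp_add, ← exp_add]
    congr 1
    linear_combination hitArg_neg_sq_add (a := a) (b := b) hm
  have hpow := rpow_neg_half_mul_rpow_neg_three_halves two_pi_pos (sub_pos.2 hm.2) hm.1
  have ht : t ≠ 0 := (hm.1.trans hm.2).ne'
  calc _ = (2 * π * (t - m)) ^ (-(1 / 2 : ℝ)) * (2 * π) ^ (-(1 / 2 : ℝ)) * m ^ (-(3 / 2 : ℝ))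
          * b * (exp (-a ^ 2 / (2 * (t - m))) * exp (-b ^ 2 / (2 * m))) := by ring
    _ = _ := by
      rw [hpow, hexp]
      field_simp

/-- Convolution identity: for positive reals `a, b, t`,
`∫₀ᵗ p_{t−m}(a)·(−p′_m(b)) dm = p_t(a+b)`, where `p_s(x) = (2πs)^{-1/2} e^{-x²/(2s)}` is the
centered Gaussian density with variance `s`, so that `−p′_m(b) = b·(2π)^{-1/2}·m^{-3/2}·e^{-b²/(2m)}`. -/
theorem stmt_4 (a b t : ℝ) (ha : 0 < a) (hb : 0 < b) (ht : 0 < t) :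
    (∫ m in (0 : ℝ)..t,
        (2 * π * (t - m)) ^ (-(1 / 2 : ℝ)) * Real.exp (-a ^ 2 / (2 * (t - m))) *
          (b * (2 * π) ^ (-(1 / 2 : ℝ)) * m ^ (-(3 / 2 : ℝ)) * Real.exp (-b ^ 2 / (2 * m))))
      = (2 * π * t) ^ (-(1 / 2 : ℝ)) * Real.exp (-(a + b) ^ 2 / (2 * t)) := by
  set K := (2 * π * t)⁻¹ * exp (-(a + b) ^ 2 / (2 * t))
  rw [integral_eq_sub_of_hasDerivAt_of_tendsto_of_nonneg ht
    (fun m hm => ((hasDerivAt_hitPrimitive hm).const_mul K).congr_deriv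
      (firstPassage_convolution_integrand_eq hm).symm)
    (fun m hm => by have := sub_pos.2 hm.2; have := hm.1; positivity)
    ((tendsto_hitPrimitive_nhdsGT_zero hb ht).const_mul K)
    ((tendsto_hitPrimitive_nhdsLT ha ht).const_mul K)]
  rw [← mul_sub, rpow_neg (by positivity), ← sqrt_eq_rpow, ← sqrt_div_self]
  ring
end

section
/- For positive real numbers a, b, t, define f_t(a,b) := (b/(2π)) ∫₀ᵗ (t−m)^{−1/2} m^{−3/2} exp( −(1/2)( a²/(t−m) + b²/m ) ) dm. Then f_t(a,b) = f_t(b,a). -/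
/-!
Substitute `m = φ x`, where `φ = swapMap t a b` is the Möbius bijection of `[0, t]` that reads
`u ↦ (a² / b²) u` in the coordinate `u = m / (t - m)`. It carries the exponent
`b² / (t - m) + a² / m` to `a² / (t - x) + b² / x`, and its Jacobian
`φ' x = t² a² b² / (a² x + b² (t - x))²` turns the prefactor `(t - m)^(-1/2) m^(-3/2)` into
`b / a` times the same prefactor in `x`. As `φ` is monotone, the change of variables needs no
regularity of the integrand.
-/

open MeasureTheory Real Set

noncomputable def hittingKernel (t a b m : ℝ) : ℝ :=
  (t - m) ^ (-(1 / 2 : ℝ)) * m ^ (-(3 / 2 : ℝ)) * exp (-(1 / 2) * (a ^ 2 / (t - m) + b ^ 2 / m))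

noncomputable def swapMap (t a b m : ℝ) : ℝ :=
  t * a ^ 2 * m / (a ^ 2 * m + b ^ 2 * (t - m))

lemma sq_rpow_neg_half_mul_rpow_neg_three_halves {P Q : ℝ} (hP : 0 ≤ P) (hQ : 0 ≤ Q) :
    (P ^ (-(1 / 2 : ℝ)) * Q ^ (-(3 / 2 : ℝ))) ^ 2 = (P * Q ^ 3)⁻¹ := by
  rw [mul_pow, ← rpow_natCast, ← rpow_natCast, ← rpow_mul hP, ← rpow_mul hQ, mul_inv,
    ← rpow_neg_one, ← rpow_natCast Q 3, ← rpow_neg hQ]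
  norm_num

section swapMap

variable {t a b m : ℝ}

lemma swapMap_denom_pos (ha : 0 < a) (hb : 0 < b) (ht : 0 < t) (hm : m ∈ Icc 0 t) :
    0 < a ^ 2 * m + b ^ 2 * (t - m) := by
  rcases hm.1.eq_or_lt with rfl | hm0
  · simpa using by positivity
  · nlinarith [mul_nonneg (sq_nonneg b) (sub_nonneg.mpr hm.2), mul_pos (pow_pos ha 2) hm0]

lemma swapMap_zero : swapMap t a b 0 = 0 := by
  simp [swapMap]

lemma swapMap_self (ha : a ≠ 0) (ht : t ≠ 0) : swapMap t a b t = t := by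
  simp only [swapMap, sub_self, mul_zero, add_zero]
  field_simp

lemma sub_swapMap (hD : a ^ 2 * m + b ^ 2 * (t - m) ≠ 0) :
    t - swapMap t a b m = t * b ^ 2 * (t - m) / (a ^ 2 * m + b ^ 2 * (t - m)) := by
  rw [swapMap]
  field_simp
  ring

lemma continuousOn_swapMap (ha : 0 < a) (hb : 0 < b) (ht : 0 < t) :
    ContinuousOn (swapMap t a b) (Icc 0 t) :=
  ContinuousOn.div (by fun_prop) (by fun_prop) fun _ hm ↦ (swapMap_denom_pos ha hb ht hm).ne'

lemma hasDerivAt_swapMap (hD : a ^ 2 * m + b ^ 2 * (t - m) ≠ 0) :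
    HasDerivAt (swapMap t a b) (t ^ 2 * a ^ 2 * b ^ 2 / (a ^ 2 * m + b ^ 2 * (t - m)) ^ 2) m := by
  have hnum : HasDerivAt (fun m : ℝ ↦ t * a ^ 2 * m) (t * a ^ 2) m := by
    simpa using (hasDerivAt_id m).const_mul (t * a ^ 2)
  have hden : HasDerivAt (fun m : ℝ ↦ a ^ 2 * m + b ^ 2 * (t - m)) (a ^ 2 - b ^ 2) m := 
    (((hasDerivAt_id' m).const_mul (a ^ 2)).add
      (((hasDerivAt_id' m).const_sub t).const_mul (b ^ 2))).congr_deriv (by ring)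
  refine (hnum.div hden hD).congr_deriv ?_
  field_simp
  ring

lemma swapMap_exponent (hm : m ≠ 0) (htm : t - m ≠ 0) (hD : a ^ 2 * m + b ^ 2 * (t - m) ≠ 0)
    (ht : t ≠ 0) (ha : a ≠ 0) (hb : b ≠ 0) :
    b ^ 2 / (t - swapMap t a b m) + a ^ 2 / swapMap t a b m = a ^ 2 / (t - m) + b ^ 2 / m := by
  rw [sub_swapMap hD, swapMap]
  field_simp
  ring

lemma swapMap_deriv_mul_hittingKernel_comp (ha : 0 < a) (hb : 0 < b) (hm : m ∈ Ioo 0 t) :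
    t ^ 2 * a ^ 2 * b ^ 2 / (a ^ 2 * m + b ^ 2 * (t - m)) ^ 2 *
        hittingKernel t b a (swapMap t a b m) = b / a * hittingKernel t a b m := by
  obtain ⟨hm0, hmt⟩ := hm
  have ht : 0 < t := hm0.trans hmt
  have htm : 0 < t - m := sub_pos.mpr hmt
  have hD := swapMap_denom_pos ha hb ht ⟨hm0.le, hmt.le⟩
  have hφ : 0 < swapMap t a b m := by unfold swapMap; positivity
  have htφ : 0 < t - swapMap t a b m := by rw [sub_swapMap hD.ne']; positivity
  have hprefactor : t ^ 2 * a ^ 2 * b ^ 2 / (a ^ 2 * m + b ^ 2 * (t - m)) ^ 2 *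
        ((t - swapMap t a b m) ^ (-(1 / 2 : ℝ)) * swapMap t a b m ^ (-(3 / 2 : ℝ))) =
      b / a * ((t - m) ^ (-(1 / 2 : ℝ)) * m ^ (-(3 / 2 : ℝ))) := by
    refine (pow_left_inj₀ (by positivity) (by positivity) two_ne_zero).mp ?_
    rw [mul_pow (t ^ 2 * a ^ 2 * b ^ 2 / _), mul_pow (b / a),
      sq_rpow_neg_half_mul_rpow_neg_three_halves htφ.le hφ.le,
      sq_rpow_neg_half_mul_rpow_neg_three_halves htm.le hm0.le, sub_swapMap hD.ne', swapMap]
    field_simp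
  rw [hittingKernel, hittingKernel,
    swapMap_exponent hm0.ne' htm.ne' hD.ne' ht.ne' ha.ne' hb.ne']
  linear_combination exp (-(1 / 2) * (a ^ 2 / (t - m) + b ^ 2 / m)) * hprefactor

theorem integral_hittingKernel_swap (ha : 0 < a) (hb : 0 < b) (ht : 0 < t) :
    ∫ m in (0 : ℝ)..t, hittingKernel t b a m =
      b / a * ∫ m in (0 : ℝ)..t, hittingKernel t a b m := by
  have hsubst := intervalIntegral.integral_comp_mul_deriv_of_deriv_nonneg
    (g := hittingKernel t b a) (by rw [uIcc_of_le ht.le]; exact continuousOn_swapMap ha hb ht)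
    (fun m hm ↦ by
      rw [min_eq_left ht.le, max_eq_right ht.le] at hm
      exact hasDerivAt_swapMap (swapMap_denom_pos ha hb ht (Ioo_subset_Icc_self hm)).ne')
    (fun _ _ ↦ by positivity)
  rw [swapMap_zero, swapMap_self ha.ne' ht.ne'] at hsubst
  rw [← hsubst, ← intervalIntegral.integral_const_mul]
  refine intervalIntegral.integral_congr_Ioo_of_le ht.le fun m hm ↦ ?_
  rw [Function.comp_apply, mul_comm]
  exact swapMap_deriv_mul_hittingKernel_comp ha hb hm

end swapMap

/-- Symmetry of the first-passage convolution integral: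
`f_t(a,b) := (b/(2π)) ∫₀ᵗ (t−m)^{-1/2} m^{-3/2} exp(−(a²/(t−m) + b²/m)/2) dm`
satisfies `f_t(a,b) = f_t(b,a)` for positive `a, b, t`. -/
theorem stmt_5 (a b t : ℝ) (ha : 0 < a) (hb : 0 < b) (ht : 0 < t) :
    (b / (2 * π)) * ∫ m in (0 : ℝ)..t,
        (t - m) ^ (-(1 / 2 : ℝ)) * m ^ (-(3 / 2 : ℝ)) *
          Real.exp (-(1 / 2) * (a ^ 2 / (t - m) + b ^ 2 / m))
      = (a / (2 * π)) * ∫ m in (0 : ℝ)..t,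
        (t - m) ^ (-(1 / 2 : ℝ)) * m ^ (-(3 / 2 : ℝ)) *
          Real.exp (-(1 / 2) * (b ^ 2 / (t - m) + a ^ 2 / m)) := by
  change b / (2 * π) * ∫ m in (0 : ℝ)..t, hittingKernel t a b m =
    a / (2 * π) * ∫ m in (0 : ℝ)..t, hittingKernel t b a m
  rw [integral_hittingKernel_swap ha hb ht]
  field_simp
end

section
/- For fixed positive real numbers b and t, define f_t(a,b) := (b/(2π)) ∫₀ᵗ (t−m)^{−1/2} m^{−3/2} exp( −(1/2)( a²/(t−m) + b²/m ) ) dm for a > 0. Then the function a ↦ f_t(a,b) is differentiable on (0,∞) and its derivative satisfies ∂_a f_t(a,b) = −((a+b)/t)·f_t(a,b). -/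
/-!
The integral has the closed form `√(2π/t) · e^{-(a+b)²/(2t)} / b`, from which the derivative is
immediate. To evaluate it, substitute `v = (b(t-m) - am) / √(t m (t-m))`, a decreasing bijection
of `(0, t)` onto `ℝ`. Then `a²/(t-m) + b²/m = (a+b)²/t + v²`, and what remains of the integrand
after dividing by `|dv/dm|` is `e^{-v²/2} (1 + v / √(v² + 4ab/t)) / (b √t)`; the odd part
`v / √(v² + 4ab/t)` integrates to zero against the Gaussian.
-/

open MeasureTheory Real Set

theorem integral_exp_neg_sq_mul_one_add_div_sqrt {c : ℝ} (hc : 0 ≤ c) :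
    ∫ v, exp (-(1 / 2) * v ^ 2) * (1 + v / √(v ^ 2 + c)) = √(2 * π) := by
  have hgauss : Integrable fun v : ℝ ↦ exp (-(1 / 2) * v ^ 2) :=
    integrable_exp_neg_mul_sq (by norm_num)
  have hodd : Integrable fun v : ℝ ↦ exp (-(1 / 2) * v ^ 2) * (v / √(v ^ 2 + c)) := by
    refine hgauss.mono (by fun_prop) (ae_of_all _ fun v ↦ ?_)
    have hle : |v| / √(v ^ 2 + c) ≤ 1 := div_le_one_of_le₀ (abs_le_sqrt (by linarith)) (sqrt_nonneg _)
    simp only [norm_mul, norm_div, norm_eq_abs, abs_of_pos (exp_pos _), abs_of_nonneg (sqrt_nonneg _)]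
    exact mul_le_of_le_one_right (exp_pos _).le hle
  have hodd_zero : ∫ v, exp (-(1 / 2) * v ^ 2) * (v / √(v ^ 2 + c)) = 0 := by
    have h := integral_neg_eq_self (fun v : ℝ ↦ exp (-(1 / 2) * v ^ 2) * (v / √(v ^ 2 + c))) volume
    simp only [neg_sq, neg_div, mul_neg, integral_neg] at h
    linarith
  have hgauss_val : ∫ v, exp (-(1 / 2) * v ^ 2) = √(2 * π) := by
    simpa [div_div_eq_mul_div, mul_comm] using integral_gaussian (1 / 2)
  simp only [mul_one_add]
  rw [integral_add hgauss hodd, hgauss_val, hodd_zero, add_zero]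

noncomputable def gaussSubst (a b t m : ℝ) : ℝ :=
  (b * (t - m) - a * m) / (√t * √m * √(t - m))

noncomputable def gaussSubstDeriv (a b t m : ℝ) : ℝ :=
  -(√t * (a * m + b * (t - m)) / (2 * √m ^ 3 * √(t - m) ^ 3))

section

variable {a b t m : ℝ}

theorem hasDerivAt_gaussSubst (hm : m ∈ Ioo 0 t) :
    HasDerivAt (gaussSubst a b t) (gaussSubstDeriv a b t m) m := by
  obtain ⟨hm0, hmt⟩ := hm
  have htm : 0 < t - m := by linarith
  have ht : 0 < t := hm0.trans hmt
  have hnum : HasDerivAt (fun x ↦ b * (t - x) - a * x) (b * (-1) - a * 1) m :=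
    (((hasDerivAt_id m).const_sub t).const_mul b).sub ((hasDerivAt_id m).const_mul a)
  have hden : HasDerivAt (fun x ↦ √t * √x * √(t - x))
      (√t * (1 / (2 * √m)) * √(t - m) + √t * √m * (1 / (2 * √(t - m)) * (-1))) m :=
    ((hasDerivAt_sqrt hm0.ne').const_mul _).mul
      ((hasDerivAt_sqrt htm.ne').comp m ((hasDerivAt_id m).const_sub t))
  refine (hnum.div hden (by positivity)).congr_deriv ?_
  have e1 := sq_sqrt hm0.le
  have e2 := sq_sqrt htm.le
  have e3 := sq_sqrt ht.le
  have := sqrt_pos.2 hm0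
  have := sqrt_pos.2 htm
  have := sqrt_pos.2 ht
  rw [gaussSubstDeriv]
  field_simp
  grind

theorem gaussSubstDeriv_neg (ha : 0 ≤ a) (hb : 0 < b) (hm : m ∈ Ioo 0 t) :
    gaussSubstDeriv a b t m < 0 := by
  obtain ⟨hm0, hmt⟩ := hm
  have htm : 0 < t - m := by linarith
  have : 0 < √t := sqrt_pos.2 (hm0.trans hmt)
  have : 0 < √m := sqrt_pos.2 hm0
  have : 0 < √(t - m) := sqrt_pos.2 htm
  have : 0 < a * m + b * (t - m) := by positivity
  rw [gaussSubstDeriv, neg_lt_zero]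
  positivity

theorem strictAntiOn_gaussSubst (ha : 0 ≤ a) (hb : 0 < b) :
    StrictAntiOn (gaussSubst a b t) (Ioo 0 t) :=
  strictAntiOn_of_hasDerivWithinAt_neg (convex_Ioo 0 t)
    (fun _ hx ↦ (hasDerivAt_gaussSubst hx).continuousAt.continuousWithinAt)
    (fun _ hx ↦ (hasDerivAt_gaussSubst (interior_subset hx)).hasDerivWithinAt)
    (fun _ hx ↦ gaussSubstDeriv_neg ha hb (interior_subset hx))

theorem gaussSubst_div_one_add_sq (ht : 0 < t) {w : ℝ} (hw : 0 < w) :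
    gaussSubst a b t (t / (1 + w ^ 2)) = (b * w ^ 2 - a) / (√t * w) := by
  have hpos : 0 < 1 + w ^ 2 := by positivity
  have hsub : t - t / (1 + w ^ 2) = t * w ^ 2 / (1 + w ^ 2) := by field_simp; ring
  have hs : √(t * w ^ 2 / (1 + w ^ 2)) = √t * w / √(1 + w ^ 2) := by
    rw [sqrt_div' _ hpos.le, sqrt_mul ht.le, sqrt_sq hw.le]
  have := sqrt_pos.2 ht
  have := sqrt_pos.2 hpos
  have e1 := sq_sqrt ht.le
  have e2 := sq_sqrt hpos.le
  rw [gaussSubst, hsub, hs, sqrt_div' _ hpos.le]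
  field_simp
  grind

theorem image_gaussSubst (ha : 0 < a) (hb : 0 < b) (ht : 0 < t) :
    gaussSubst a b t '' Ioo 0 t = univ := by
  refine eq_univ_of_forall fun v ↦ ?_
  -- the positive root of `b w² - v √t w - a`, with `w² = (t - m) / m`
  set d := √((v * √t) ^ 2 + 4 * a * b)
  have hd : d ^ 2 = (v * √t) ^ 2 + 4 * a * b := sq_sqrt (by positivity)
  have hw : 0 < (v * √t + d) / (2 * b) := by
    have : 0 ≤ d := sqrt_nonneg _
    have : 0 < v * √t + d := by nlinarith [mul_pos ha hb]
    positivity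
  set w := (v * √t + d) / (2 * b)
  have hroot : b * w ^ 2 - a = v * √t * w := by
    have : (2 * b * w - v * √t) ^ 2 = d ^ 2 := by simp only [w]; field_simp; ring
    nlinarith
  have hpos : 1 < 1 + w ^ 2 := by nlinarith
  refine ⟨t / (1 + w ^ 2), ⟨by positivity, div_lt_self ht hpos⟩, ?_⟩
  have := sqrt_pos.2 ht
  rw [gaussSubst_div_one_add_sq ht hw, hroot]
  field_simp

theorem sq_sqrt_mul_sqrt_mul_sqrt (hm : m ∈ Ioo 0 t) :
    (√t * √m * √(t - m)) ^ 2 = t * m * (t - m) := by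
  obtain ⟨hm0, hmt⟩ := hm
  rw [mul_pow, mul_pow, sq_sqrt (hm0.trans hmt).le, sq_sqrt hm0.le, sq_sqrt (sub_pos.2 hmt).le]

theorem gaussSubst_sq (hm : m ∈ Ioo 0 t) :
    gaussSubst a b t m ^ 2 = (b * (t - m) - a * m) ^ 2 / (t * m * (t - m)) := by
  rw [gaussSubst, div_pow, sq_sqrt_mul_sqrt_mul_sqrt hm]

theorem add_sq_div_add_gaussSubst_sq (hm : m ∈ Ioo 0 t) :
    (a + b) ^ 2 / t + gaussSubst a b t m ^ 2 = a ^ 2 / (t - m) + b ^ 2 / m := by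
  rw [gaussSubst_sq hm]
  obtain ⟨hm0, hmt⟩ := hm
  have htm : 0 < t - m := by linarith
  have ht : 0 < t := hm0.trans hmt
  field_simp
  ring

theorem sqrt_gaussSubst_sq_add (ha : 0 ≤ a) (hb : 0 ≤ b) (hm : m ∈ Ioo 0 t) :
    √(gaussSubst a b t m ^ 2 + 4 * a * b / t) = (a * m + b * (t - m)) / (√t * √m * √(t - m)) := by
  have hnum : 0 ≤ a * m + b * (t - m) := by
    have := hm.1; have := sub_pos.2 hm.2; positivity
  rw [← sqrt_sq (div_nonneg hnum (by positivity)), div_pow, sq_sqrt_mul_sqrt_mul_sqrt hm,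
    gaussSubst_sq hm]
  congr 1
  obtain ⟨hm0, hmt⟩ := hm
  have htm : 0 < t - m := by linarith
  have ht : 0 < t := hm0.trans hmt
  field_simp
  ring

theorem rpow_mul_rpow_mul_exp_eq_gaussSubst (ha : 0 ≤ a) (hb : 0 < b) (hm : m ∈ Ioo 0 t) :
    (t - m) ^ (-(1 / 2 : ℝ)) * m ^ (-(3 / 2 : ℝ)) * exp (-(1 / 2) * (a ^ 2 / (t - m) + b ^ 2 / m)) =
      exp (-(a + b) ^ 2 / (2 * t)) / (b * √t) * (|gaussSubstDeriv a b t m| *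
        (exp (-(1 / 2) * gaussSubst a b t m ^ 2) *
          (1 + gaussSubst a b t m / √(gaussSubst a b t m ^ 2 + 4 * a * b / t)))) := by
  have hexp : -(1 / 2) * (a ^ 2 / (t - m) + b ^ 2 / m) =
      -(a + b) ^ 2 / (2 * t) + -(1 / 2) * gaussSubst a b t m ^ 2 := by
    rw [← add_sq_div_add_gaussSubst_sq hm]; ring
  rw [sqrt_gaussSubst_sq_add ha hb.le hm, abs_of_neg (gaussSubstDeriv_neg ha hb hm), hexp, exp_add]
  obtain ⟨hm0, hmt⟩ := hm
  have htm : 0 < t - m := by linarith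
  have ht : 0 < t := hm0.trans hmt
  have hr1 : (t - m) ^ (-(1 / 2 : ℝ)) = (√(t - m))⁻¹ := by
    rw [rpow_neg htm.le, sqrt_eq_rpow]
  have hr2 : m ^ (-(3 / 2 : ℝ)) = (√m ^ 3)⁻¹ := by
    rw [rpow_neg hm0.le, sqrt_eq_rpow, ← rpow_natCast, ← rpow_mul hm0.le]
    norm_num
  have e1 := sq_sqrt hm0.le
  have e2 := sq_sqrt htm.le
  have e3 := sq_sqrt ht.le
  have := sqrt_pos.2 hm0
  have := sqrt_pos.2 htm
  have := sqrt_pos.2 ht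
  have : 0 < a * m + b * (t - m) := by positivity
  rw [hr1, hr2, gaussSubstDeriv, gaussSubst]
  field_simp
  grind

theorem integral_rpow_mul_rpow_mul_exp (ha : 0 < a) (hb : 0 < b) (ht : 0 < t) :
    ∫ m in (0 : ℝ)..t,
        (t - m) ^ (-(1 / 2 : ℝ)) * m ^ (-(3 / 2 : ℝ)) * exp (-(1 / 2) * (a ^ 2 / (t - m) + b ^ 2 / m)) =
      exp (-(a + b) ^ 2 / (2 * t)) / (b * √t) * √(2 * π) := by
  have hsubst := integral_image_eq_integral_abs_deriv_smul measurableSet_Ioo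
    (fun _ hm ↦ (hasDerivAt_gaussSubst hm).hasDerivWithinAt)
    (strictAntiOn_gaussSubst (t := t) ha.le hb).injOn
    (fun v ↦ exp (-(1 / 2) * v ^ 2) * (1 + v / √(v ^ 2 + 4 * a * b / t)))
  rw [image_gaussSubst ha hb ht, setIntegral_univ,
    integral_exp_neg_sq_mul_one_add_div_sqrt (by positivity)] at hsubst
  rw [intervalIntegral.integral_of_le ht.le, integral_Ioc_eq_integral_Ioo,
    setIntegral_congr_fun measurableSet_Ioo fun _ hm ↦ rpow_mul_rpow_mul_exp_eq_gaussSubst ha.le hb hm,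
    integral_const_mul, hsubst]
  simp only [smul_eq_mul]

end

/-- For fixed `b, t > 0`, the function
`a ↦ f_t(a,b) := (b/(2π)) ∫₀ᵗ (t−m)^{-1/2} m^{-3/2} exp(−(a²/(t−m) + b²/m)/2) dm`
is differentiable on `(0,∞)` with derivative `∂_a f_t(a,b) = −((a+b)/t)·f_t(a,b)`. -/
theorem stmt_6 (b t : ℝ) (hb : 0 < b) (ht : 0 < t) (f : ℝ → ℝ)
    (hf : ∀ a : ℝ, f a = (b / (2 * π)) * ∫ m in (0 : ℝ)..t,
        (t - m) ^ (-(1 / 2 : ℝ)) * m ^ (-(3 / 2 : ℝ)) *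
          Real.exp (-(1 / 2) * (a ^ 2 / (t - m) + b ^ 2 / m))) :
    ∀ a : ℝ, 0 < a → HasDerivAt f (-((a + b) / t) * f a) a := by
  intro a ha
  set C := √(2 * π) / (2 * π * √t)
  have hclosed : ∀ x ∈ Ioi (0 : ℝ), f x = C * exp (-(x + b) ^ 2 / (2 * t)) := by
    intro x hx
    have := sqrt_pos.2 ht
    rw [hf, integral_rpow_mul_rpow_mul_exp hx hb ht]
    simp only [C]
    field_simp
  have hexponent : HasDerivAt (fun x ↦ -(x + b) ^ 2 / (2 * t)) (-((a + b) / t)) a := by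
    refine ((((hasDerivAt_id' a).add_const b).fun_pow 2).neg.div_const (2 * t)).congr_deriv ?_
    field_simp
    ring
  have hnear : f =ᶠ[nhds a] fun x ↦ C * exp (-(x + b) ^ 2 / (2 * t)) :=
    Filter.eventuallyEq_of_mem (Ioi_mem_nhds ha) hclosed
  refine ((hexponent.exp.const_mul C).congr_of_eventuallyEq hnear).congr_deriv ?_
  rw [hclosed a ha]
  ring
end

section
/- Let m > 0, let B : [0,m] → ℝ be a function with B(0) = 0, and let r ∈ [0,m]. Define the cyclically shifted path Θ_r(B) : [0,m] → ℝ by Θ_r(B)(x) = B(r+x) − B(r) for 0 ≤ x ≤ m−r, and Θ_r(B)(x) = B(r+x−m) + B(m) − B(r) for m−r ≤ x ≤ m. Then for every α ∈ (0,1], sup_{0≤s<t≤m} |Θ_r(B)(t) − Θ_r(B)(s)| / (t−s)^α ≤ 2 · sup_{0≤s<t≤m} |B(t) − B(s)| / (t−s)^α. -/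
open ENNReal

/-!
If `s < t` lie on the same side of the cut point `m - r`, the increment `Θ t - Θ s` is an
increment of `B` over a translate of `[s, t]`. Otherwise, since `B 0 = 0`, it splits as the sum
of the increments of `B` over `[0, r + t - m]` and `[r + s, m]`; both intervals are shorter than
`t - s` and `α ≥ 0`, so each term contributes at most the Hölder seminorm of `B`.
-/

noncomputable def holderSeminormOn (f : ℝ → ℝ) (m α : ℝ) : ℝ≥0∞ :=
  ⨆ (s : ℝ) (t : ℝ) (_ : 0 ≤ s ∧ s < t ∧ t ≤ m), ENNReal.ofReal (|f t - f s| / (t - s) ^ α)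

lemma ofReal_div_rpow_le_holderSeminormOn (f : ℝ → ℝ) {m α s t : ℝ}
    (hs : 0 ≤ s) (hst : s < t) (ht : t ≤ m) :
    ENNReal.ofReal (|f t - f s| / (t - s) ^ α) ≤ holderSeminormOn f m α :=
  le_iSup₂_of_le s t (le_iSup_of_le ⟨hs, hst, ht⟩ le_rfl)

lemma ofReal_div_rpow_le_holderSeminormOn_of_translate (f : ℝ → ℝ) {m α c s t : ℝ}
    (hs : 0 ≤ c + s) (hst : s < t) (ht : c + t ≤ m) :
    ENNReal.ofReal (|f (c + t) - f (c + s)| / (t - s) ^ α) ≤ holderSeminormOn f m α := by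
  have h := ofReal_div_rpow_le_holderSeminormOn f (α := α) hs (by linarith) ht
  rwa [add_sub_add_left_eq_sub] at h

lemma ofReal_abs_add_div_rpow_le {x y d₁ d₂ d α : ℝ} (hα : 0 ≤ α)
    (hd₁ : 0 < d₁) (hd₂ : 0 < d₂) (hd₁d : d₁ ≤ d) (hd₂d : d₂ ≤ d) :
    ENNReal.ofReal (|x + y| / d ^ α)
      ≤ ENNReal.ofReal (|x| / d₁ ^ α) + ENNReal.ofReal (|y| / d₂ ^ α) := by
  have shorter {a e : ℝ} (he : 0 < e) (hed : e ≤ d) : |a| / d ^ α ≤ |a| / e ^ α :=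
    div_le_div_of_nonneg_left (abs_nonneg a) (Real.rpow_pos_of_pos he α)
      (Real.rpow_le_rpow he.le hed hα)
  have hd : 0 ≤ d ^ α := Real.rpow_nonneg (hd₁.le.trans hd₁d) α
  rw [← ENNReal.ofReal_add (by positivity) (by positivity)]
  refine ENNReal.ofReal_le_ofReal ?_
  calc |x + y| / d ^ α ≤ (|x| + |y|) / d ^ α := div_le_div_of_nonneg_right (abs_add_le x y) hd
    _ = |x| / d ^ α + |y| / d ^ α := add_div _ _ _
    _ ≤ |x| / d₁ ^ α + |y| / d₂ ^ α := add_le_add (shorter hd₁ hd₁d) (shorter hd₂ hd₂d)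

lemma ofReal_div_rpow_cyclicShift_le {m r : ℝ} {B Θ : ℝ → ℝ} (hB0 : B 0 = 0)
    (hr : r ∈ Set.Icc 0 m)
    (hΘ1 : ∀ x : ℝ, 0 ≤ x → x ≤ m - r → Θ x = B (r + x) - B r)
    (hΘ2 : ∀ x : ℝ, m - r ≤ x → x ≤ m → Θ x = B (r + x - m) + B m - B r)
    {α s t : ℝ} (hα : 0 ≤ α) (hs : 0 ≤ s) (hst : s < t) (ht : t ≤ m) :
    ENNReal.ofReal (|Θ t - Θ s| / (t - s) ^ α) ≤ 2 * holderSeminormOn B m α := by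
  obtain ⟨hr0, hrm⟩ := hr
  have hH : holderSeminormOn B m α ≤ 2 * holderSeminormOn B m α :=
    le_mul_of_one_le_left zero_le one_le_two
  rcases le_or_gt t (m - r) with ht_left | ht_right
  · have e : Θ t - Θ s = B (r + t) - B (r + s) := by
      rw [hΘ1 s hs (by linarith), hΘ1 t (by linarith) ht_left]; ring
    rw [e]
    exact (ofReal_div_rpow_le_holderSeminormOn_of_translate B
      (by linarith) hst (by linarith)).trans hH
  rcases le_or_gt (m - r) s with hs_right | hs_left
  · have e : Θ t - Θ s = B (r - m + t) - B (r - m + s) := by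
      rw [hΘ2 s hs_right (by linarith), hΘ2 t ht_right.le ht, add_sub_right_comm r t m,
        add_sub_right_comm r s m]
      ring
    rw [e]
    exact (ofReal_div_rpow_le_holderSeminormOn_of_translate B
      (by linarith) hst (by linarith)).trans hH
  · have e : Θ t - Θ s = (B (r + t - m) - B 0) + (B m - B (r + s)) := by
      rw [hΘ1 s hs hs_left.le, hΘ2 t ht_right.le ht, hB0]; ring
    have hinit := ofReal_div_rpow_le_holderSeminormOn B (m := m) (α := α) (le_refl 0)
      (show 0 < r + t - m by linarith) (by linarith)
    have hfinal := ofReal_div_rpow_le_holderSeminormOn B (m := m) (α := α)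
      (show 0 ≤ r + s by linarith) (by linarith) le_rfl
    rw [sub_zero] at hinit
    rw [e, two_mul]
    exact (ofReal_abs_add_div_rpow_le hα (by linarith) (by linarith) (by linarith)
      (by linarith)).trans (add_le_add hinit hfinal)

theorem stmt_10_general (m : ℝ) (B : ℝ → ℝ) (hB0 : B 0 = 0)
    (r : ℝ) (hr : r ∈ Set.Icc 0 m) (Θ : ℝ → ℝ)
    (hΘ1 : ∀ x : ℝ, 0 ≤ x → x ≤ m - r → Θ x = B (r + x) - B r)
    (hΘ2 : ∀ x : ℝ, m - r ≤ x → x ≤ m → Θ x = B (r + x - m) + B m - B r)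
    (α : ℝ) (hα0 : 0 < α) :
    (⨆ (s : ℝ) (t : ℝ) (_ : 0 ≤ s ∧ s < t ∧ t ≤ m),
        ENNReal.ofReal (|Θ t - Θ s| / (t - s) ^ α))
      ≤ 2 * ⨆ (s : ℝ) (t : ℝ) (_ : 0 ≤ s ∧ s < t ∧ t ≤ m),
        ENNReal.ofReal (|B t - B s| / (t - s) ^ α) :=
  iSup₂_le fun _ _ => iSup_le fun ⟨hs, hst, ht⟩ =>
    ofReal_div_rpow_cyclicShift_le hB0 hr hΘ1 hΘ2 hα0.le hs hst ht

/-- The Vervaat-type cyclic shift `Θ_r(B)` of a path `B : [0,m] → ℝ` with `B(0) = 0` has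
`α`-Hölder seminorm at most twice that of `B`. -/
theorem stmt_10 (m : ℝ) (hm : 0 < m) (B : ℝ → ℝ) (hB0 : B 0 = 0)
    (r : ℝ) (hr : r ∈ Set.Icc 0 m) (Θ : ℝ → ℝ)
    (hΘ1 : ∀ x : ℝ, 0 ≤ x → x ≤ m - r → Θ x = B (r + x) - B r)
    (hΘ2 : ∀ x : ℝ, m - r ≤ x → x ≤ m → Θ x = B (r + x - m) + B m - B r)
    (α : ℝ) (hα0 : 0 < α) (hα1 : α ≤ 1) :
    (⨆ (s : ℝ) (t : ℝ) (_ : 0 ≤ s ∧ s < t ∧ t ≤ m),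
        ENNReal.ofReal (|Θ t - Θ s| / (t - s) ^ α))
      ≤ 2 * ⨆ (s : ℝ) (t : ℝ) (_ : 0 ≤ s ∧ s < t ∧ t ≤ m),
        ENNReal.ofReal (|B t - B s| / (t - s) ^ α) :=
  stmt_10_general m B hB0 r hr Θ hΘ1 hΘ2 α hα0
end

section
/- Let K₀ be the metric space whose points are pairs (σ, f) with σ ∈ [0,∞) and f : [0,∞) → ℝ continuous, f(0) = 0, and f(t) = f(σ) for all t ≥ σ, equipped with the distance d((σ,f),(σ′,g)) := |σ − σ′| + sup_{y ≥ 0} |f(y) − g(y)|. Define the concatenation of (σ,f) and (σ′,g) as the pair (σ+σ′, f•g), where f•g(t) = f(t) for 0 ≤ t ≤ σ, f•g(t) = f(σ) + g(t−σ) for σ ≤ t ≤ σ+σ′, and f•g(t) = f•g(σ+σ′) for t ≥ σ+σ′. Then the concatenation map K₀ × K₀ → K₀, ((σ,f),(σ′,g)) ↦ (σ+σ′, f•g), is continuous. -/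
/-!
Because `g 0 = 0` and `f` is constant beyond `σ`, the concatenation is `f•g(t) = f t + g (t - σ)`
(truncated subtraction). The difference of two concatenations therefore splits into
`f - f'`, `g (· - σ) - g (· - σ')` and `g - g'` evaluated at `· - σ'`. The outer terms are bounded
by the distances of the inputs; the middle one is small because `g`, being continuous and
eventually constant, is uniformly continuous, and `σ ↦ t - σ` is `1`-Lipschitz.
-/

open NNReal

/-- A point of `K₀`: a lifetime `σ ∈ [0,∞)` together with a continuous function
`f : [0,∞) → ℝ` with `f 0 = 0` which is constant equal to `f σ` beyond its lifetime `σ`. -/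
def IsK0 (x : ℝ≥0 × (ℝ≥0 → ℝ)) : Prop :=
  Continuous x.2 ∧ x.2 0 = 0 ∧ ∀ t : ℝ≥0, x.1 ≤ t → x.2 t = x.2 x.1

/-- The distance `d((σ,f),(σ',g)) = |σ − σ'| + sup_{y ≥ 0} |f(y) − g(y)|` on `K₀`. -/
noncomputable def K0dist (x y : ℝ≥0 × (ℝ≥0 → ℝ)) : ℝ :=
  |(x.1 : ℝ) - (y.1 : ℝ)| + ⨆ t : ℝ≥0, |x.2 t - y.2 t|

/-- Concatenation `((σ,f),(σ',g)) ↦ (σ+σ', f•g)`: `f•g(t) = f(t)` for `t ≤ σ` and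
`f•g(t) = f(σ) + g(t−σ)` for `t ≥ σ` (so `f•g` is constant beyond `σ+σ'` whenever `g` is
constant beyond `σ'`). -/
noncomputable def K0concat (x y : ℝ≥0 × (ℝ≥0 → ℝ)) : ℝ≥0 × (ℝ≥0 → ℝ) :=
  (x.1 + y.1, fun t => if t ≤ x.1 then x.2 t else x.2 x.1 + y.2 (t - x.1))

open Filter

lemma NNReal.dist_tsub_tsub_le (t a b : ℝ≥0) : dist (t - a) (t - b) ≤ dist a b := by
  simp only [NNReal.dist_eq, NNReal.coe_sub_def]
  calc |max ((t : ℝ) - a) 0 - max ((t : ℝ) - b) 0|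
      ≤ max |(t : ℝ) - a - (t - b)| |(0 : ℝ) - 0| := abs_max_sub_max_le_max _ _ _ _
    _ = |(a : ℝ) - b| := by
      rw [sub_self, abs_zero, max_eq_left (abs_nonneg _), abs_sub_comm]
      ring_nf

lemma Continuous.bddAbove_range_of_forall_ge_eq {F : ℝ≥0 → ℝ} {c : ℝ≥0} (hF : Continuous F)
    (hc : ∀ t, c ≤ t → F t = F c) : BddAbove (Set.range F) := by
  refine ((isCompact_Icc (a := 0) (b := c)).image hF).bddAbove.mono ?_
  rintro _ ⟨t, rfl⟩
  rcases le_total t c with h | h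
  · exact ⟨t, ⟨zero_le, h⟩, rfl⟩
  · exact ⟨c, ⟨zero_le, le_rfl⟩, (hc t h).symm⟩

namespace IsK0

variable {x y : ℝ≥0 × (ℝ≥0 → ℝ)}

lemma uniformContinuous (hx : IsK0 x) : UniformContinuous x.2 := by
  refine hx.1.uniformContinuous_of_tendsto_cocompact (x := x.2 x.1) ?_
  rw [cocompact_eq_atTop]
  exact tendsto_const_nhds.congr' <|
    (eventually_ge_atTop x.1).mono fun t ht => (hx.2.2 t ht).symm

lemma bddAbove_range_abs_sub (hx : IsK0 x) (hy : IsK0 y) :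
    BddAbove (Set.range fun t => |x.2 t - y.2 t|) := by
  refine (hx.1.sub hy.1).abs.bddAbove_range_of_forall_ge_eq (c := max x.1 y.1) fun t ht => ?_
  rw [max_le_iff] at ht
  simp only [hx.2.2 t ht.1, hy.2.2 t ht.2, hx.2.2 _ (le_max_left _ _),
    hy.2.2 _ (le_max_right _ _)]

lemma abs_sub_le_K0dist (hx : IsK0 x) (hy : IsK0 y) (t : ℝ≥0) :
    |x.2 t - y.2 t| ≤ K0dist x y :=
  (le_ciSup (hx.bddAbove_range_abs_sub hy) t).trans (le_add_of_nonneg_left (abs_nonneg _))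

lemma concat_snd_apply (hx : IsK0 x) (hy : IsK0 y) (t : ℝ≥0) :
    (K0concat x y).2 t = x.2 t + y.2 (t - x.1) := by
  by_cases ht : t ≤ x.1
  · simp [K0concat, ht, tsub_eq_zero_of_le ht, hy.2.1]
  · simp [K0concat, ht, hx.2.2 t (le_of_not_ge ht)]

end IsK0

lemma abs_fst_sub_le_K0dist (x y : ℝ≥0 × (ℝ≥0 → ℝ)) : |(x.1 : ℝ) - y.1| ≤ K0dist x y :=
  le_add_of_nonneg_right (Real.iSup_nonneg fun _ => abs_nonneg _)

lemma K0dist_le_of_forall_le {x y : ℝ≥0 × (ℝ≥0 → ℝ)} {C : ℝ} (hC : 0 ≤ C)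
    (h : ∀ t, |x.2 t - y.2 t| ≤ C) : K0dist x y ≤ |(x.1 : ℝ) - y.1| + C :=
  add_le_add_right (Real.iSup_le h hC) _

lemma K0dist_concat_le {x y x' y' : ℝ≥0 × (ℝ≥0 → ℝ)} (hx : IsK0 x) (hy : IsK0 y)
    (hx' : IsK0 x') (hy' : IsK0 y') {η : ℝ} (hη : ∀ t, |y.2 (t - x.1) - y.2 (t - x'.1)| ≤ η) :
    K0dist (K0concat x y) (K0concat x' y') ≤ 2 * K0dist x x' + 2 * K0dist y y' + η := by
  have hpoint (t : ℝ≥0) : |(K0concat x y).2 t - (K0concat x' y').2 t|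
      ≤ K0dist x x' + η + K0dist y y' := by
    rw [hx.concat_snd_apply hy, hx'.concat_snd_apply hy']
    calc _ = |(x.2 t - x'.2 t) + (y.2 (t - x.1) - y.2 (t - x'.1))
            + (y.2 (t - x'.1) - y'.2 (t - x'.1))| := by ring_nf
      _ ≤ _ := abs_add_three _ _ _
      _ ≤ _ := add_le_add_three (hx.abs_sub_le_K0dist hx' t) (hη t)
                (hy.abs_sub_le_K0dist hy' _)
  have hfst : |((K0concat x y).1 : ℝ) - (K0concat x' y').1| ≤ K0dist x x' + K0dist y y' := by
    simp only [K0concat, NNReal.coe_add]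
    calc _ = |((x.1 : ℝ) - x'.1) + ((y.1 : ℝ) - y'.1)| := by ring_nf
      _ ≤ _ := abs_add_le _ _
      _ ≤ _ := add_le_add (abs_fst_sub_le_K0dist x x') (abs_fst_sub_le_K0dist y y')
  linarith [K0dist_le_of_forall_le ((abs_nonneg _).trans (hpoint 0)) hpoint]

/-- The concatenation map `K₀ × K₀ → K₀` is continuous for the distance `K0dist`. -/
theorem stmt_11 :
    ∀ x y : ℝ≥0 × (ℝ≥0 → ℝ), IsK0 x → IsK0 y →
      ∀ ε : ℝ, 0 < ε → ∃ δ : ℝ, 0 < δ ∧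
        ∀ x' y' : ℝ≥0 × (ℝ≥0 → ℝ), IsK0 x' → IsK0 y' →
          K0dist x x' < δ → K0dist y y' < δ →
            K0dist (K0concat x y) (K0concat x' y') < ε := by
  intro x y hx hy ε hε
  obtain ⟨δ₀, hδ₀, hy_unif⟩ :=
    Metric.uniformContinuous_iff.1 hy.uniformContinuous (ε / 3) (by positivity)
  refine ⟨min δ₀ (ε / 6), by positivity, fun x' y' hx' hy' hxx' hyy' => ?_⟩
  have hshift (t : ℝ≥0) : |y.2 (t - x.1) - y.2 (t - x'.1)| ≤ ε / 3 := by
    have hlife : dist x.1 x'.1 < δ₀ := by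
      rw [NNReal.dist_eq]
      exact (abs_fst_sub_le_K0dist x x').trans_lt (hxx'.trans_le (min_le_left _ _))
    exact (hy_unif ((NNReal.dist_tsub_tsub_le t _ _).trans_lt hlife)).le
  have hxδ : K0dist x x' < ε / 6 := hxx'.trans_le (min_le_right _ _)
  have hyδ : K0dist y y' < ε / 6 := hyy'.trans_le (min_le_right _ _)
  linarith [K0dist_concat_le hx hy hx' hy' hshift]
end
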